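/- Let A be a regular n×n max-plus matrix (n ≥ 1). Suppose there exists x0 : Fin n → ℝ such that the orbit x of A from x0 satisfies: for every i : Fin n, (x k i)/k converges as k → ∞ to some η i ∈ ℝ. Then for every y0 : Fin n → ℝ, the orbit y of A from y0 satisfies (y k i)/k → η i as k → ∞ for every i. That is, if the cycle-time vector exists for at least one initial vector, then it exists for every initial vector and is independent of the initial vector. -/

import Mathlib

/-- `A` is regular: every row contains at least one finite entry. -/
def MPRegular {n : ℕ} (A : Matrix (Fin n) (Fin n) (WithBot ℝ)) : Prop :=
  ∀ i : Fin n, ∃ j : Fin n, A i j ≠ ⊥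

/-- The orbit of a (regular) max-plus matrix `A` from the initial vector
`x0`: `x 0 = x0` and `x (k+1) i = max_j (A i j + x k j)` (for regular `A`
this maximum is a real number, extracted with `WithBot.unbot' 0`). -/
noncomputable def mpOrbit {n : ℕ} (A : Matrix (Fin n) (Fin n) (WithBot ℝ))
    (x0 : Fin n → ℝ) : ℕ → Fin n → ℝ
  | 0 => x0
  | k + 1 => fun i =>
      WithBot.unbotD 0 (Finset.univ.sup fun j => A i j + ((mpOrbit A x0 k j : ℝ) : WithBot ℝ))

/-- One max-plus step is monotone and additively homogeneous. -/
lemma mp_step_le {n : ℕ} (A : Matrix (Fin n) (Fin n) (WithBot ℝ)) (hA : MPRegular A)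
    (u v : Fin n → ℝ) (c : ℝ) (huv : ∀ j, u j ≤ v j + c) (i : Fin n) :
    WithBot.unbotD 0 (Finset.univ.sup fun j => A i j + ((u j : ℝ) : WithBot ℝ)) ≤
    WithBot.unbotD 0 (Finset.univ.sup fun j => A i j + ((v j : ℝ) : WithBot ℝ)) + c := by
  obtain ⟨j0, hj0⟩ := hA i
  set Su := Finset.univ.sup fun j => A i j + ((u j : ℝ) : WithBot ℝ) with hSu
  set Sv := Finset.univ.sup fun j => A i j + ((v j : ℝ) : WithBot ℝ) with hSv
  have hSune : Su ≠ ⊥ := by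
    intro hb
    have hle : A i j0 + ((u j0 : ℝ) : WithBot ℝ) ≤ Su := hSu ▸
      Finset.le_sup (f := fun j => A i j + ((u j : ℝ) : WithBot ℝ)) (Finset.mem_univ j0)
    rw [hb, le_bot_iff, WithBot.add_eq_bot] at hle
    rcases hle with h1 | h1
    · exact hj0 h1
    · exact WithBot.coe_ne_bot h1
  have hSvne : Sv ≠ ⊥ := by
    intro hb
    have hle : A i j0 + ((v j0 : ℝ) : WithBot ℝ) ≤ Sv := hSv ▸
      Finset.le_sup (f := fun j => A i j + ((v j : ℝ) : WithBot ℝ)) (Finset.mem_univ j0)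
    rw [hb, le_bot_iff, WithBot.add_eq_bot] at hle
    rcases hle with h1 | h1
    · exact hj0 h1
    · exact WithBot.coe_ne_bot h1
  obtain ⟨a, ha⟩ := WithBot.ne_bot_iff_exists.mp hSune
  obtain ⟨b, hb⟩ := WithBot.ne_bot_iff_exists.mp hSvne
  have hmain : Su ≤ Sv + (c : WithBot ℝ) := by
    apply Finset.sup_le
    intro j _
    calc A i j + ((u j : ℝ) : WithBot ℝ)
        ≤ A i j + (((v j + c : ℝ)) : WithBot ℝ) := by
          exact add_le_add_right (WithBot.coe_le_coe.mpr (huv j)) _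
      _ = (A i j + ((v j : ℝ) : WithBot ℝ)) + (c : WithBot ℝ) := by
          rw [WithBot.coe_add, add_assoc]
      _ ≤ Sv + (c : WithBot ℝ) :=
          add_le_add_left (hSv ▸ Finset.le_sup
            (f := fun j => A i j + ((v j : ℝ) : WithBot ℝ)) (Finset.mem_univ j)) _
  rw [← ha, ← hb] at hmain ⊢
  rw [← WithBot.coe_add, WithBot.coe_le_coe] at hmain
  simpa using hmain

/-- Orbits preserve the "dominated by `c`" relation. -/
lemma mp_orbit_le {n : ℕ} (A : Matrix (Fin n) (Fin n) (WithBot ℝ)) (hA : MPRegular A)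
    (u0 v0 : Fin n → ℝ) (c : ℝ) (huv : ∀ j, u0 j ≤ v0 j + c) :
    ∀ k j, mpOrbit A u0 k j ≤ mpOrbit A v0 k j + c := by
  intro k
  induction k with
  | zero => exact huv
  | succ k ih =>
      intro i
      exact mp_step_le A hA (mpOrbit A u0 k) (mpOrbit A v0 k) c ih i

/-- If the cycle-time vector of a regular max-plus matrix exists for at least
one initial vector, then it exists for every initial vector and is the same. -/
theorem cycle_time_vector_independent {n : ℕ} (hn : 1 ≤ n)
    (A : Matrix (Fin n) (Fin n) (WithBot ℝ)) (hA : MPRegular A)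
    (x0 : Fin n → ℝ) (η : Fin n → ℝ)
    (h : ∀ i : Fin n,
      Filter.Tendsto (fun k : ℕ => mpOrbit A x0 k i / (k : ℝ))
        Filter.atTop (nhds (η i))) :
    ∀ (y0 : Fin n → ℝ) (i : Fin n),
      Filter.Tendsto (fun k : ℕ => mpOrbit A y0 k i / (k : ℝ))
        Filter.atTop (nhds (η i)) := by
  intro y0 i
  haveI : Nonempty (Fin n) := Fin.pos_iff_nonempty.mp hn
  have hne : (Finset.univ : Finset (Fin n)).Nonempty := Finset.univ_nonempty
  set c₁ : ℝ := Finset.univ.sup' hne (fun j => y0 j - x0 j) with hc₁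
  set c₂ : ℝ := Finset.univ.sup' hne (fun j => x0 j - y0 j) with hc₂
  have h1 : ∀ j, y0 j ≤ x0 j + c₁ := fun j => by
    have := Finset.le_sup' (fun j => y0 j - x0 j) (Finset.mem_univ j)
    linarith
  have h2 : ∀ j, x0 j ≤ y0 j + c₂ := fun j => by
    have := Finset.le_sup' (fun j => x0 j - y0 j) (Finset.mem_univ j)
    linarith
  have hb1 := mp_orbit_le A hA y0 x0 c₁ h1
  have hb2 := mp_orbit_le A hA x0 y0 c₂ h2
  set C : ℝ := |c₁| + |c₂| with hC
  have habs : ∀ k, |mpOrbit A y0 k i - mpOrbit A x0 k i| ≤ C := by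
    intro k
    rw [abs_le]
    constructor
    · have := hb2 k i
      have h1 := le_abs_self c₂
      have h2 := abs_nonneg c₁
      simp only [hC]; linarith
    · have := hb1 k i
      have h1 := le_abs_self c₁
      have h2 := abs_nonneg c₂
      simp only [hC]; linarith
  have hzero : Filter.Tendsto
      (fun k : ℕ => (mpOrbit A y0 k i - mpOrbit A x0 k i) / (k : ℝ))
      Filter.atTop (nhds 0) := by
    apply squeeze_zero_norm (a := fun k : ℕ => C / (k : ℝ))
    · intro k
      rcases Nat.eq_zero_or_pos k with hk | hk
      · simp [hk]
      · rw [norm_div, Real.norm_natCast, Real.norm_eq_abs]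
        apply div_le_div_of_nonneg_right (habs k) -- may need fixing
        exact_mod_cast hk.le
    · exact tendsto_const_div_atTop_nhds_zero_nat C
  have := (h i).add hzero
  rw [add_zero] at this
  apply this.congr
  intro k
  rw [← add_div]
  ring_nf
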